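/- arXiv:0909.1255 — 2 statements merged into one kernel-verified Lean document; each statement's English description precedes it below -/
import Mathlib

section
/- If S is a T-Zamfirescu mapping on a cone metric space (M,d), then there exists δ with 0 ≤ δ < 1 such that d(TSx, TSy) ≤ δ·d(Tx,Ty) + 2δ·d(Tx,TSx) for all x,y ∈ M. -/
open Filter Topology

variable {E : Type*}

/-- A cone in a real Banach space. -/
def IsCone [NormedAddCommGroup E] [NormedSpace ℝ E] (P : Set E) : Prop :=
  IsClosed P ∧ P.Nonempty ∧ P ≠ {0} ∧
  (∀ (a b : ℝ), 0 ≤ a → 0 ≤ b → ∀ x ∈ P, ∀ y ∈ P, a • x + b • y ∈ P) ∧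
  (∀ x, x ∈ P → -x ∈ P → x = 0)

/-- The partial order induced by the cone `P`: `x ≤ y` iff `y - x ∈ P`. -/
def coneLe [NormedAddCommGroup E] (P : Set E) (x y : E) : Prop := y - x ∈ P

/-- `x ≪ y` iff `y - x ∈ int P`. -/
def coneLt [NormedAddCommGroup E] (P : Set E) (x y : E) : Prop := y - x ∈ interior P

/-- A normal cone with normal constant `K`. -/
def IsNormalCone [NormedAddCommGroup E] (P : Set E) (K : ℝ) : Prop :=
  0 < K ∧ ∀ x y : E, coneLe P 0 x → coneLe P x y → ‖x‖ ≤ K * ‖y‖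

/-- A cone metric on `M` with values in `E`, relative to the cone `P`. -/
def IsConeMetric [NormedAddCommGroup E] {M : Type*} (P : Set E) (d : M → M → E) : Prop :=
  (∀ x y : M, coneLe P 0 (d x y)) ∧
  (∀ x y : M, d x y = 0 ↔ x = y) ∧
  (∀ x y : M, d x y = d y x) ∧
  (∀ x y z : M, coneLe P (d x y) (d x z + d z y))

/-- Convergence of a sequence in a cone metric space. -/
def ConeConverges [NormedAddCommGroup E] {M : Type*} (P : Set E) (d : M → M → E)
    (s : ℕ → M) (x : M) : Prop :=
  ∀ c : E, coneLt P 0 c → ∃ n₀ : ℕ, ∀ n > n₀, coneLt P (d (s n) x) c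

/-- Cauchy sequence in a cone metric space. -/
def ConeCauchy [NormedAddCommGroup E] {M : Type*} (P : Set E) (d : M → M → E)
    (s : ℕ → M) : Prop :=
  ∀ c : E, coneLt P 0 c → ∃ n₀ : ℕ, ∀ n ≥ n₀, ∀ m ≥ n₀, coneLt P (d (s n) (s m)) c

/-- Completeness of a cone metric space. -/
def ConeComplete [NormedAddCommGroup E] {M : Type*} (P : Set E) (d : M → M → E) : Prop :=
  ∀ s : ℕ → M, ConeCauchy P d s → ∃ x : M, ConeConverges P d s x

/-- Continuity of a self-map of a cone metric space. -/
def ConeContinuous [NormedAddCommGroup E] {M : Type*} (P : Set E) (d : M → M → E)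
    (T : M → M) : Prop :=
  ∀ (s : ℕ → M) (x : M), ConeConverges P d s x → ConeConverges P d (fun n => T (s n)) (T x)

/-- `T` is subsequentially convergent. -/
def SubseqConvergent [NormedAddCommGroup E] {M : Type*} (P : Set E) (d : M → M → E)
    (T : M → M) : Prop :=
  ∀ s : ℕ → M, (∃ y, ConeConverges P d (fun n => T (s n)) y) →
    ∃ φ : ℕ → ℕ, StrictMono φ ∧ ∃ z, ConeConverges P d (fun n => s (φ n)) z

/-- `T` is sequentially convergent. -/
def SeqConvergent [NormedAddCommGroup E] {M : Type*} (P : Set E) (d : M → M → E)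
    (T : M → M) : Prop :=
  ∀ s : ℕ → M, (∃ y, ConeConverges P d (fun n => T (s n)) y) →
    ∃ z, ConeConverges P d s z

/-- `S` is a `T`-Zamfirescu mapping. -/
def TZamfirescu [NormedAddCommGroup E] [NormedSpace ℝ E] {M : Type*} (P : Set E)
    (d : M → M → E) (T S : M → M) : Prop :=
  ∃ a b c : ℝ, 0 ≤ a ∧ a < 1 ∧ 0 ≤ b ∧ b < 1/2 ∧ 0 ≤ c ∧ c < 1/2 ∧
    ∀ x y : M,
      coneLe P (d (T (S x)) (T (S y))) (a • d (T x) (T y)) ∨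
      coneLe P (d (T (S x)) (T (S y))) (b • (d (T x) (T (S x)) + d (T y) (T (S y)))) ∨
      coneLe P (d (T (S x)) (T (S y))) (c • (d (T x) (T (S y)) + d (T y) (T (S x))))

/-- `S` is a `T`-weak contraction. -/
def TWeakContraction [NormedAddCommGroup E] [NormedSpace ℝ E] {M : Type*} (P : Set E)
    (d : M → M → E) (T S : M → M) : Prop :=
  ∃ δ L : ℝ, 0 < δ ∧ δ < 1 ∧ 0 ≤ L ∧
    ∀ x y : M, coneLe P (d (T (S x)) (T (S y))) (δ • d (T x) (T y) + L • d (T y) (T (S x)))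

/-!
Conditions (TZ1)–(TZ3) are the Banach, Kannan and Chatterjea conditions for the points
`Tx, Ty, TSx, TSy`. Write `D = d(TSx, TSy)`, `A = d(Tx, Ty)` and `B = d(Tx, TSx)`.
Under (TZ1), `D ≤ a A ≤ a (A + 2B)`. Under (TZ2) and (TZ3) the triangle inequality bounds the right-hand side by `k (A + 2B + D)` with
`k = b` resp. `k = c`; absorbing `D` gives `D ≤ k / (1 - k) • (A + 2B)`, and `k / (1 - k) < 1`
because `k < 1/2`. So `δ = max a (max (b / (1 - b)) (c / (1 - c)))` works in every case.
-/

namespace IsCone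

variable {E : Type*} [NormedAddCommGroup E] [NormedSpace ℝ E] {P : Set E}

theorem add_mem (hP : IsCone P) {x y : E} (hx : x ∈ P) (hy : y ∈ P) : x + y ∈ P := by
  simpa using hP.2.2.2.1 1 1 zero_le_one zero_le_one x hx y hy

theorem smul_mem (hP : IsCone P) {t : ℝ} (ht : 0 ≤ t) {x : E} (hx : x ∈ P) : t • x ∈ P := by
  simpa using hP.2.2.2.1 t 0 ht le_rfl x hx x hx

theorem coneLe_refl (hP : IsCone P) (x : E) : coneLe P x x := by
  obtain ⟨y, hy⟩ := hP.2.1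
  simpa [coneLe] using hP.smul_mem le_rfl hy

theorem coneLe_trans (hP : IsCone P) {x y z : E} (hxy : coneLe P x y) (hyz : coneLe P y z) :
    coneLe P x z := by
  simpa [coneLe] using hP.add_mem hyz hxy

theorem coneLe_add (hP : IsCone P) {x y x' y' : E} (h : coneLe P x y) (h' : coneLe P x' y') :
    coneLe P (x + x') (y + y') := by
  have e : y + y' - (x + x') = (y - x) + (y' - x') := by abel
  simpa [coneLe, e] using hP.add_mem h h'

theorem coneLe_smul (hP : IsCone P) {t : ℝ} (ht : 0 ≤ t) {x y : E} (h : coneLe P x y) :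
    coneLe P (t • x) (t • y) := by
  simpa [coneLe, smul_sub] using hP.smul_mem ht h

theorem smul_coneLe_smul_of_le (hP : IsCone P) {s t : ℝ} (hst : s ≤ t) {x : E}
    (hx : coneLe P 0 x) : coneLe P (s • x) (t • x) := by
  simpa [coneLe, sub_smul] using hP.smul_mem (sub_nonneg.mpr hst) hx

theorem coneLe_smul_of_coneLe_smul_add_self (hP : IsCone P) {k : ℝ} (hk1 : k < 1)
    {u z : E} (h : coneLe P z (k • (u + z))) : coneLe P z ((k / (1 - k)) • u) := by
  have hk : (1 - k) ≠ 0 := by linarith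
  have e : (1 - k)⁻¹ • (k • (u + z) - z) = (k / (1 - k)) • u - z := by
    match_scalars
    · field_simp
    · field_simp; ring
  rw [coneLe, ← e]
  exact hP.smul_mem (inv_nonneg.mpr (sub_nonneg.mpr hk1.le)) h

end IsCone

namespace IsConeMetric

variable {E M : Type*} [NormedAddCommGroup E] [NormedSpace ℝ E] {P : Set E} {d : M → M → E}

theorem coneLe_add_add (hP : IsCone P) (hd : IsConeMetric P d) (x y z w : M) :
    coneLe P (d x w) (d x y + d y z + d z w) :=
  hP.coneLe_trans (hd.2.2.2 x w z) (hP.coneLe_add (hd.2.2.2 x z y) (hP.coneLe_refl _))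

theorem zero_coneLe_add_two_smul (hP : IsCone P) (hd : IsConeMetric P d) (p q p' : M) :
    coneLe P 0 (d p q + (2 : ℝ) • d p p') := by
  simpa using hP.coneLe_add (hd.1 p q) (hP.coneLe_smul zero_le_two (hd.1 p p'))

theorem coneLe_of_banach (hP : IsCone P) (hd : IsConeMetric P d) {a : ℝ} (ha : 0 ≤ a)
    {p q p' q' : M} (h : coneLe P (d p' q') (a • d p q)) :
    coneLe P (d p' q') (a • (d p q + (2 : ℝ) • d p p')) := by
  refine hP.coneLe_trans h (hP.coneLe_smul ha ?_)
  simpa using hP.coneLe_add (hP.coneLe_refl (d p q)) (hP.coneLe_smul zero_le_two (hd.1 p p'))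

theorem coneLe_of_kannan (hP : IsCone P) (hd : IsConeMetric P d) {b : ℝ} (hb0 : 0 ≤ b)
    (hb1 : b < 1) {p q p' q' : M} (h : coneLe P (d p' q') (b • (d p p' + d q q'))) :
    coneLe P (d p' q') ((b / (1 - b)) • (d p q + (2 : ℝ) • d p p')) := by
  have htri : coneLe P (d p p' + d q q') ((d p q + (2 : ℝ) • d p p') + d p' q') := by
    have e : (d p q + (2 : ℝ) • d p p') + d p' q' = d p p' + (d q p + d p p' + d p' q') := by
      rw [hd.2.2.1 q p]; module
    rw [e]
    exact hP.coneLe_add (hP.coneLe_refl _) (hd.coneLe_add_add hP q p p' q')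
  exact hP.coneLe_smul_of_coneLe_smul_add_self hb1 (hP.coneLe_trans h (hP.coneLe_smul hb0 htri))

theorem coneLe_of_chatterjea (hP : IsCone P) (hd : IsConeMetric P d) {c : ℝ} (hc0 : 0 ≤ c)
    (hc1 : c < 1) {p q p' q' : M} (h : coneLe P (d p' q') (c • (d p q' + d q p'))) :
    coneLe P (d p' q') ((c / (1 - c)) • (d p q + (2 : ℝ) • d p p')) := by
  have htri : coneLe P (d p q' + d q p') ((d p q + (2 : ℝ) • d p p') + d p' q') := by
    have e : (d p q + (2 : ℝ) • d p p') + d p' q' = (d p p' + d p' q') + (d q p + d p p') := by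
      rw [hd.2.2.1 q p]; module
    rw [e]
    exact hP.coneLe_add (hd.2.2.2 p q' p') (hd.2.2.2 q p' p)
  exact hP.coneLe_smul_of_coneLe_smul_add_self hc1 (hP.coneLe_trans h (hP.coneLe_smul hc0 htri))

end IsConeMetric

theorem tz_weak_ineq_left_general {E M : Type*} [NormedAddCommGroup E] [NormedSpace ℝ E]
    (P : Set E) (hP : IsCone P) (d : M → M → E)
    (hd : IsConeMetric P d) (T S : M → M) (hTZ : TZamfirescu P d T S) :
    ∃ δ : ℝ, 0 ≤ δ ∧ δ < 1 ∧ ∀ x y : M,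
      coneLe P (d (T (S x)) (T (S y)))
        (δ • d (T x) (T y) + (2 * δ) • d (T x) (T (S x))) := by
  obtain ⟨a, b, c, ha0, ha1, hb0, hb1, hc0, hc1, hTZ⟩ := hTZ
  have hβ : b / (1 - b) < 1 := (div_lt_one (by linarith)).mpr (by linarith)
  have hγ : c / (1 - c) < 1 := (div_lt_one (by linarith)).mpr (by linarith)
  refine ⟨max a (max (b / (1 - b)) (c / (1 - c))), le_max_of_le_left ha0,
    max_lt ha1 (max_lt hβ hγ), fun x y => ?_⟩
  have hcase : ∃ k ≤ max a (max (b / (1 - b)) (c / (1 - c))),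
      coneLe P (d (T (S x)) (T (S y))) (k • (d (T x) (T y) + (2 : ℝ) • d (T x) (T (S x)))) := by
    rcases hTZ x y with h | h | h
    · exact ⟨a, le_max_left _ _, hd.coneLe_of_banach hP ha0 h⟩
    · exact ⟨_, le_max_of_le_right (le_max_left _ _),
        hd.coneLe_of_kannan hP hb0 (by linarith) h⟩
    · exact ⟨_, le_max_of_le_right (le_max_right _ _),
        hd.coneLe_of_chatterjea hP hc0 (by linarith) h⟩
  obtain ⟨k, hk, h⟩ := hcase
  have hmono := hP.smul_coneLe_smul_of_le hk (hd.zero_coneLe_add_two_smul hP (T x) (T y) (T (S x)))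
  simpa only [smul_add, smul_smul, mul_comm _ (2 : ℝ)] using hP.coneLe_trans h hmono

theorem tz_weak_ineq_left {E M : Type*} [NormedAddCommGroup E] [NormedSpace ℝ E]
    [CompleteSpace E] (P : Set E) (hP : IsCone P) (d : M → M → E)
    (hd : IsConeMetric P d) (T S : M → M) (hTZ : TZamfirescu P d T S) :
    ∃ δ : ℝ, 0 ≤ δ ∧ δ < 1 ∧ ∀ x y : M,
      coneLe P (d (T (S x)) (T (S y)))
        (δ • d (T x) (T y) + (2 * δ) • d (T x) (T (S x))) :=
  tz_weak_ineq_left_general P hP d hd T S hTZ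
end

section
/- Let (M,d) be a complete cone metric space over a normal cone P with normal constant K, and let T,S : M → M with S a T-Zamfirescu mapping. Then for every x₀ ∈ M, the sequence (TSⁿx₀) is Cauchy in M and hence converges to some y₀ ∈ M. -/
open Filter Topology

variable {E : Type*}

/-!
Put `x n = T (S^[n] x₀)`. Each of the three Zamfirescu alternatives, applied to the pair
`(S^[n] x₀, S^[n+1] x₀)`, bounds `d (x (n+1)) (x (n+2))` by `δ • d (x n) (x (n+1))` with
`δ = max a (b / (1 - b)) (c / (1 - c)) < 1`, so consecutive distances are dominated by `δ ^ n • D`.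
Telescoping gives `d (x n) (x m) ≤ (δ ^ n / (1 - δ)) • D` for `n ≤ m`; the right-hand side tends to
`0` in norm, hence eventually lies below any `c ≫ 0`, and since `int P + P ⊆ int P` so does
`d (x n) (x m)`. Completeness then yields the limit.
-/

open Finset

lemma eventually_coneLt_of_zero_coneLt [NormedAddCommGroup E] {P : Set E} {c : E}
    (hc : coneLt P 0 c) :
    ∀ᶠ z in 𝓝 (0 : E), coneLt P z c := by
  have hcont : Continuous fun z : E => c - z := continuous_const.sub continuous_id
  exact hcont.continuousAt.preimage_mem_nhds (by simpa [coneLt] using isOpen_interior.mem_nhds hc)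

section Cone

variable [NormedAddCommGroup E] [NormedSpace ℝ E] {P : Set E}

lemma IsCone.zero_mem (hP : IsCone P) : (0 : E) ∈ P := by
  obtain ⟨x, hx⟩ := hP.2.1
  simpa using hP.2.2.2.1 0 0 le_rfl le_rfl x hx x hx

lemma IsCone.add_mem_s3 (hP : IsCone P) {x y : E} (hx : x ∈ P) (hy : y ∈ P) : x + y ∈ P := by
  simpa using hP.2.2.2.1 1 1 zero_le_one zero_le_one x hx y hy

lemma IsCone.smul_mem_s3 (hP : IsCone P) {a : ℝ} (ha : 0 ≤ a) {x : E} (hx : x ∈ P) : a • x ∈ P := by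
  simpa using hP.2.2.2.1 a 0 ha le_rfl x hx x hx

lemma IsCone.add_mem_interior (hP : IsCone P) {x y : E} (hx : x ∈ interior P) (hy : y ∈ P) :
    x + y ∈ interior P := by
  have himage : (· + y) '' interior P ⊆ P := by
    rintro _ ⟨w, hw, rfl⟩
    exact hP.add_mem_s3 (interior_subset hw) hy
  exact interior_maximal himage (isOpenMap_add_right y _ isOpen_interior) ⟨x, hx, rfl⟩

lemma coneLe_refl (hP : IsCone P) (x : E) : coneLe P x x := by
  simpa [coneLe] using hP.zero_mem

lemma coneLe_trans (hP : IsCone P) {x y z : E} (hxy : coneLe P x y) (hyz : coneLe P y z) :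
    coneLe P x z := by
  simpa [coneLe] using hP.add_mem_s3 hyz hxy

lemma coneLe_add (hP : IsCone P) {x y x' y' : E} (h : coneLe P x y) (h' : coneLe P x' y') :
    coneLe P (x + x') (y + y') := by
  unfold coneLe at *
  convert hP.add_mem_s3 h h' using 1
  abel

lemma coneLe_smul (hP : IsCone P) {a : ℝ} (ha : 0 ≤ a) {x y : E} (h : coneLe P x y) :
    coneLe P (a • x) (a • y) := by
  unfold coneLe at *
  simpa [smul_sub] using hP.smul_mem_s3 ha h

lemma smul_coneLe_smul_of_le (hP : IsCone P) {s t : ℝ} (hst : s ≤ t) {x : E}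
    (hx : coneLe P 0 x) : coneLe P (s • x) (t • x) := by
  unfold coneLe at *
  simpa [sub_smul] using hP.smul_mem_s3 (sub_nonneg.2 hst) hx

lemma coneLt_of_coneLe_of_coneLt (hP : IsCone P) {x y z : E} (hxy : coneLe P x y)
    (hyz : coneLt P y z) : coneLt P x z := by
  unfold coneLe coneLt at *
  simpa using hP.add_mem_interior hyz hxy

lemma coneLe_div_one_sub_smul (hP : IsCone P) {b : ℝ} (hb1 : b < 1) {y z : E}
    (h : coneLe P z (b • (y + z))) : coneLe P z ((b / (1 - b)) • y) := by
  unfold coneLe at *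
  have hb : 1 - b ≠ 0 := by linarith
  convert hP.smul_mem_s3 (inv_nonneg.2 (sub_nonneg.2 hb1.le)) h using 1
  match_scalars <;> field_simp
  ring

lemma coneLe_pow_smul_of_succ_le (hP : IsCone P) {δ : ℝ} (hδ : 0 ≤ δ) {f : ℕ → E}
    (h : ∀ n, coneLe P (f (n + 1)) (δ • f n)) (n : ℕ) : coneLe P (f n) (δ ^ n • f 0) := by
  induction n with
  | zero => simpa using coneLe_refl hP (f 0)
  | succ n ih =>
    simpa [pow_succ', mul_smul] using coneLe_trans hP (h n) (coneLe_smul hP hδ ih)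

end Cone

section ConeMetric

variable [NormedAddCommGroup E] {P : Set E} {M : Type*} {d : M → M → E}

lemma IsConeMetric.nonneg (hd : IsConeMetric P d) (x y : M) : coneLe P 0 (d x y) := hd.1 x y

lemma IsConeMetric.self_eq_zero (hd : IsConeMetric P d) (x : M) : d x x = 0 := (hd.2.1 x x).2 rfl

lemma IsConeMetric.comm (hd : IsConeMetric P d) (x y : M) : d x y = d y x := hd.2.2.1 x y

lemma IsConeMetric.triangle (hd : IsConeMetric P d) (x y z : M) :
    coneLe P (d x z) (d x y + d y z) := hd.2.2.2 x z y

variable [NormedSpace ℝ E]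

lemma IsConeMetric.coneLe_sum_Ico (hP : IsCone P) (hd : IsConeMetric P d) {s : ℕ → M}
    {u : ℕ → E} (h : ∀ n, coneLe P (d (s n) (s (n + 1))) (u n)) {n m : ℕ} (hnm : n ≤ m) :
    coneLe P (d (s n) (s m)) (∑ i ∈ Ico n m, u i) := by
  induction m, hnm using Nat.le_induction with
  | base => simpa [hd.self_eq_zero] using coneLe_refl hP (0 : E)
  | succ m hnm ih =>
    rw [sum_Ico_succ_top hnm]
    exact coneLe_trans hP (hd.triangle _ (s m) _) (coneLe_add hP ih (h m))

lemma IsConeMetric.coneLe_geometric (hP : IsCone P) (hd : IsConeMetric P d) {s : ℕ → M}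
    {δ : ℝ} (hδ0 : 0 ≤ δ) (hδ1 : δ < 1) {D : E} (hD : coneLe P 0 D)
    (h : ∀ n, coneLe P (d (s n) (s (n + 1))) (δ ^ n • D)) {n m : ℕ} (hnm : n ≤ m) :
    coneLe P (d (s n) (s m)) ((δ ^ n / (1 - δ)) • D) := by
  have hsum := hd.coneLe_sum_Ico hP h hnm
  rw [← sum_smul] at hsum
  exact coneLe_trans hP hsum
    (smul_coneLe_smul_of_le hP (geom_sum_Ico_le_of_lt_one hδ0 hδ1) hD)

lemma ConeCauchy.of_coneLe_of_tendsto_zero (hP : IsCone P) (hd : IsConeMetric P d)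
    {s : ℕ → M} {u : ℕ → E} (hu : Tendsto u atTop (𝓝 0))
    (h : ∀ n m, n ≤ m → coneLe P (d (s n) (s m)) (u n)) : ConeCauchy P d s := by
  intro c hc
  obtain ⟨n₀, hn₀⟩ := eventually_atTop.1 (hu.eventually (eventually_coneLt_of_zero_coneLt hc))
  refine ⟨n₀, fun n hn m hm => ?_⟩
  rcases le_total n m with hnm | hmn
  · exact coneLt_of_coneLe_of_coneLt hP (h n m hnm) (hn₀ n hn)
  · rw [hd.comm]
    exact coneLt_of_coneLe_of_coneLt hP (h m n hmn) (hn₀ m hm)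

lemma ConeCauchy.of_geometric (hP : IsCone P) (hd : IsConeMetric P d) {s : ℕ → M}
    {δ : ℝ} (hδ0 : 0 ≤ δ) (hδ1 : δ < 1) {D : E} (hD : coneLe P 0 D)
    (h : ∀ n, coneLe P (d (s n) (s (n + 1))) (δ ^ n • D)) : ConeCauchy P d s := by
  have hu : Tendsto (fun n => (δ ^ n / (1 - δ)) • D) atTop (𝓝 0) := by
    simpa using ((tendsto_pow_atTop_nhds_zero_of_lt_one hδ0 hδ1).div_const (1 - δ)).smul_const D
  exact .of_coneLe_of_tendsto_zero hP hd hu fun n m hnm =>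
    hd.coneLe_geometric hP hδ0 hδ1 hD h hnm

lemma TZamfirescu.exists_coneLe_smul (hP : IsCone P) (hd : IsConeMetric P d) {T S : M → M}
    (hTZ : TZamfirescu P d T S) :
    ∃ δ : ℝ, 0 ≤ δ ∧ δ < 1 ∧
      ∀ x, coneLe P (d (T (S x)) (T (S (S x)))) (δ • d (T x) (T (S x))) := by
  obtain ⟨a, b, c, ha0, ha1, -, hb1, hc0, hc1, hzam⟩ := hTZ
  refine ⟨max a (max (b / (1 - b)) (c / (1 - c))), le_max_of_le_left ha0,
    max_lt ha1 (max_lt ?_ ?_), fun x => ?_⟩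
  · rw [div_lt_one (by linarith)]; linarith
  · rw [div_lt_one (by linarith)]; linarith
  have hD : coneLe P 0 (d (T x) (T (S x))) := hd.nonneg _ _
  rcases hzam x (S x) with ha | hb | hc
  · exact coneLe_trans hP ha (smul_coneLe_smul_of_le hP (le_max_left _ _) hD)
  · exact coneLe_trans hP (coneLe_div_one_sub_smul hP (by linarith) hb)
      (smul_coneLe_smul_of_le hP (le_max_of_le_right (le_max_left _ _)) hD)
  · -- the term `d (T (S x)) (T (S x))` vanishes; the other one splits by the triangle inequality
    rw [hd.self_eq_zero, add_zero] at hc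
    have hc' := coneLe_trans hP hc (coneLe_smul hP hc0 (hd.triangle _ (T (S x)) _))
    exact coneLe_trans hP (coneLe_div_one_sub_smul hP (by linarith) hc')
      (smul_coneLe_smul_of_le hP (le_max_of_le_right (le_max_right _ _)) hD)

lemma TZamfirescu.exists_coneLe_pow_smul (hP : IsCone P) (hd : IsConeMetric P d)
    {T S : M → M} (hTZ : TZamfirescu P d T S) :
    ∃ δ : ℝ, 0 ≤ δ ∧ δ < 1 ∧ ∀ x n,
      coneLe P (d (T (S^[n] x)) (T (S^[n + 1] x))) (δ ^ n • d (T x) (T (S x))) := by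
  obtain ⟨δ, hδ0, hδ1, hstep⟩ := hTZ.exists_coneLe_smul hP hd
  refine ⟨δ, hδ0, hδ1, fun x n => ?_⟩
  refine coneLe_pow_smul_of_succ_le hP hδ0
    (f := fun n => d (T (S^[n] x)) (T (S^[n + 1] x))) (fun k => ?_) n
  simpa only [Function.iterate_succ_apply'] using hstep (S^[k] x)

end ConeMetric

theorem tz_iterates_cauchy_and_converge_general {E M : Type*} [NormedAddCommGroup E]
    [NormedSpace ℝ E] (P : Set E) (hP : IsCone P)
    (d : M → M → E) (hd : IsConeMetric P d)
    (hcomp : ConeComplete P d) (T S : M → M) (hTZ : TZamfirescu P d T S) :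
    ∀ x₀ : M, ConeCauchy P d (fun n => T (S^[n] x₀)) ∧
      ∃ y₀ : M, ConeConverges P d (fun n => T (S^[n] x₀)) y₀ := by
  intro x₀
  obtain ⟨δ, hδ0, hδ1, hgeom⟩ := hTZ.exists_coneLe_pow_smul hP hd
  have hcauchy : ConeCauchy P d (fun n => T (S^[n] x₀)) :=
    .of_geometric hP hd hδ0 hδ1 (hd.nonneg _ _) (hgeom x₀)
  exact ⟨hcauchy, hcomp _ hcauchy⟩

theorem tz_iterates_cauchy_and_converge {E M : Type*} [NormedAddCommGroup E]
    [NormedSpace ℝ E] [CompleteSpace E] (P : Set E) (K : ℝ) (hP : IsCone P)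
    (hK : IsNormalCone P K) (d : M → M → E) (hd : IsConeMetric P d)
    (hcomp : ConeComplete P d) (T S : M → M) (hTZ : TZamfirescu P d T S) :
    ∀ x₀ : M, ConeCauchy P d (fun n => T (S^[n] x₀)) ∧
      ∃ y₀ : M, ConeConverges P d (fun n => T (S^[n] x₀)) y₀ :=
  tz_iterates_cauchy_and_converge_general P hP d hd hcomp T S hTZ
end
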